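/- Let R be a weakly bleached local ring such that M₂(R) is strongly clean, and let σ be an endomorphism of R with σ(J(R)) ⊆ J(R). Then M₂(R[[x; σ]]) is strongly clean. -/

import Mathlib

/-- An element of a ring is strongly clean if it is the sum of an idempotent and a unit
that commute with each other. -/
def IsStronglyClean {S : Type*} [Ring S] (a : S) : Prop :=
  ∃ e u : S, IsIdempotentElem e ∧ IsUnit u ∧ a = e + u ∧ e * u = u * e

/-- A local ring `R` is weakly bleached if for all `j₁, j₂ ∈ J(R)` (the nonunits) the
additive maps `x ↦ (1+j₁)x - xj₂` and `x ↦ j₂x - x(1+j₁)` are surjective. -/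
def IsWeaklyBleached (R : Type*) [Ring R] : Prop :=
  ∀ j₁ j₂ : R, ¬ IsUnit j₁ → ¬ IsUnit j₂ →
    Function.Surjective (fun x : R => (1 + j₁) * x - x * j₂) ∧
    Function.Surjective (fun x : R => j₂ * x - x * (1 + j₁))

/-!
Let `π : M₂(R[[x; σ]]) → M₂(R)` reduce the entries modulo `x`. Power series with unit constant
term are units, and this lifts to `2 × 2` matrices: `α` is a unit as soon as `π α` is. So `α` is
strongly clean when `π α` or `1 - π α` is a unit. Otherwise the idempotent of a strongly clean
decomposition of `π α` is nontrivial, hence conjugate to `diag(1, 0)` over the local ring `R`;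
the commuting unit then becomes diagonal, and `π α` is conjugate to `diag(p, 1 + j)` with
`p, j ∈ J(R)`. Lifting the conjugation, `α` is conjugate to a matrix `β` with
`π β = diag(p, 1 + j)`. Clearing the off-diagonal entries of `β` amounts to a Riccati and a
Sylvester equation over `R[[x; σ]]`, solved coefficient by coefficient: the `n`-th coefficient
is governed by the maps `y ↦ (1 + j) y - y σⁿ(p)` and `y ↦ y (1 + σⁿ(j)) - p y`, surjective
because `R` is weakly bleached and `σ` preserves `J(R)`. The resulting `diag(a, e)` has `1 - a`
and `e` units, so it is strongly clean.
-/

open Matrix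

section StronglyClean

variable {A B : Type*} [Ring A] [Ring B]

lemma IsStronglyClean.of_isUnit {a : A} (h : IsUnit a) : IsStronglyClean a :=
  ⟨0, a, .zero, h, (zero_add a).symm, by simp⟩

lemma IsStronglyClean.of_isUnit_one_sub {a : A} (h : IsUnit (1 - a)) : IsStronglyClean a :=
  ⟨1, a - 1, .one, by simpa using h.neg, by abel, by simp⟩

lemma IsStronglyClean.map {F : Type*} [FunLike F A B] [RingHomClass F A B] (f : F) {a : A}
    (h : IsStronglyClean a) : IsStronglyClean (f a) := by
  obtain ⟨e, u, he, hu, rfl, hcomm⟩ := h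
  exact ⟨f e, f u, he.map f, hu.map f, map_add f e u, by rw [← map_mul, hcomm, map_mul]⟩

lemma IsConj.exists_ringEquiv {a b : A} (h : IsConj a b) :
    ∃ f : A ≃+* A, f a = b ∧ ∀ x, IsConj x (f x) := by
  obtain ⟨u, hu⟩ := h
  refine ⟨MulSemiringAction.toRingEquiv (ConjAct Aˣ) A (ConjAct.toConjAct u), ?_,
    fun x => ⟨u, ?_⟩⟩ <;> simp [ConjAct.units_smul_def, SemiconjBy, hu.eq, mul_assoc]

lemma IsConj.isStronglyClean {a b : A} (h : IsConj a b) (ha : IsStronglyClean a) :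
    IsStronglyClean b := by
  obtain ⟨f, rfl, -⟩ := h.exists_ringEquiv
  exact ha.map f

lemma IsConj.isUnit_iff {a b : A} (h : IsConj a b) : IsUnit a ↔ IsUnit b := by
  obtain ⟨f, rfl, -⟩ := h.exists_ringEquiv
  exact (isUnit_map_iff f a).symm

lemma IsConj.one_sub {a b : A} (h : IsConj a b) : IsConj (1 - a) (1 - b) := by
  obtain ⟨u, hu⟩ := h
  exact ⟨u, by simp only [SemiconjBy, mul_sub, sub_mul, mul_one, one_mul, hu.eq]⟩

lemma IsConj.exists_isConj_map_eq {M N F G : Type*} [Monoid M] [Monoid N] [FunLike F M N]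
    [MonoidHomClass F M N] [FunLike G N M] [MonoidHomClass G N M] (f : F) (g : G)
    (hfg : Function.RightInverse g f) {a : M} {b : N} (h : IsConj (f a) b) :
    ∃ a', IsConj a a' ∧ f a' = b := by
  obtain ⟨u, hu⟩ := h
  set v := Units.map (g : N →* M) u
  refine ⟨v * a * ↑v⁻¹, ⟨v, by simp [SemiconjBy, mul_assoc]⟩, ?_⟩
  have hfv : f v = u := hfg u
  have hfv' : f ↑v⁻¹ = ↑u⁻¹ := hfg ↑u⁻¹
  rw [map_mul, map_mul, hfv, hfv', hu.eq, Units.mul_inv_cancel_right]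

end StronglyClean

section Matrix

variable {B : Type*} [Ring B]

lemma Matrix.isUnit_diagonal_iff {n : Type*} [Fintype n] [DecidableEq n] {d : n → B} :
    IsUnit (diagonal d) ↔ ∀ i, IsUnit (d i) := by
  refine ⟨fun ⟨V, hV⟩ i => ⟨⟨d i, (↑V⁻¹ : Matrix n n B) i i, ?_, ?_⟩, rfl⟩, fun h => ?_⟩
  · have := congrFun (congrFun V.mul_inv i) i
    rwa [hV, diagonal_mul, one_apply_eq] at this
  · have := congrFun (congrFun V.inv_mul i) i
    rwa [hV, mul_diagonal, one_apply_eq] at this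
  · exact (Pi.isUnit_iff.mpr h).map (diagonalRingHom n B)

lemma Matrix.isUnit_lowerUnipotent (z : B) : IsUnit !![1, 0; z, 1] :=
  ⟨⟨!![1, 0; z, 1], !![1, 0; -z, 1], by simp [one_fin_two], by simp [one_fin_two]⟩, rfl⟩

lemma Matrix.isUnit_upperUnipotent (y : B) : IsUnit !![1, y; 0, 1] :=
  ⟨⟨!![1, y; 0, 1], !![1, -y; 0, 1], by simp [one_fin_two], by simp [one_fin_two]⟩, rfl⟩

lemma Matrix.isUnit_of_isUnit_schur {M : Matrix (Fin 2) (Fin 2) B} (u : Bˣ) (hu : M 0 0 = u)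
    (hs : IsUnit (M 1 1 - M 1 0 * ↑u⁻¹ * M 0 1)) : IsUnit M := by
  have hM : M = !![1, 0; M 1 0 * ↑u⁻¹, 1] * diagonal ![↑u, M 1 1 - M 1 0 * ↑u⁻¹ * M 0 1] *
      !![1, ↑u⁻¹ * M 0 1; 0, 1] := by
    rw [diagonal_vec2, mul_fin_two, mul_fin_two, eta_fin_two M]
    simp [hu, mul_assoc]
  rw [hM]
  refine ((isUnit_lowerUnipotent _).mul ?_).mul (isUnit_upperUnipotent _)
  exact isUnit_diagonal_iff.mpr (by simp [Fin.forall_fin_two, hs])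

lemma Matrix.eq_diagonal_of_commute {M : Matrix (Fin 2) (Fin 2) B}
    (h : Commute M (diagonal ![1, 0])) : M = diagonal ![M 0 0, M 1 1] := by
  have h01 := congrFun (congrFun h.eq 0) 1
  have h10 := congrFun (congrFun h.eq 1) 0
  simp at h01 h10
  ext i j
  fin_cases i <;> fin_cases j <;> simp [h01, h10]

lemma Matrix.isStronglyClean_diagonal {n : Type*} [Fintype n] [DecidableEq n] {d : n → B}
    (h : ∀ i, IsStronglyClean (d i)) : IsStronglyClean (diagonal d) := by
  choose e u he hu hd hcomm using h
  refine ⟨diagonal e, diagonal u, ?_, isUnit_diagonal_iff.mpr hu, ?_, ?_⟩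
  · simp [IsIdempotentElem, diagonal_mul_diagonal, fun i => (he i).eq]
  · rw [diagonal_add]
    exact congrArg diagonal (funext hd)
  · simp [diagonal_mul_diagonal, hcomm]

end Matrix

section MapMatrix

variable {A B : Type*} [Ring A] [Ring B]

lemma RingHom.mapMatrix_rightInverse {m : Type*} [Fintype m] [DecidableEq m] {f : A →+* B}
    {g : B →+* A} (hfg : Function.RightInverse g f) :
    Function.RightInverse (g.mapMatrix : Matrix m m B →+* _) f.mapMatrix := fun M => by
  ext
  simp [hfg _]

variable (f : A →+* B) [IsLocalHom f]

lemma Matrix.isUnit_of_mapMatrix_eq_one {N : Matrix (Fin 2) (Fin 2) A}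
    (h : f.mapMatrix N = 1) : IsUnit N := by
  have hN : ∀ i j, f (N i j) = (1 : Matrix (Fin 2) (Fin 2) B) i j := fun i j =>
    congrFun (congrFun h i) j
  obtain ⟨u, hu⟩ := IsUnit.of_map f (N 0 0) (by simp [hN])
  refine isUnit_of_isUnit_schur u hu.symm (IsUnit.of_map f _ ?_)
  simp [hN]

lemma Matrix.isUnit_of_isUnit_mapMatrix (g : B →+* A) (hfg : Function.RightInverse g f)
    {M : Matrix (Fin 2) (Fin 2) A} (h : IsUnit (f.mapMatrix M)) : IsUnit M := by
  obtain ⟨V, hV⟩ := h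
  have hN : IsUnit (M * g.mapMatrix ↑V⁻¹) := isUnit_of_mapMatrix_eq_one f <| by
    rw [map_mul, RingHom.mapMatrix_rightInverse hfg, ← hV, Units.mul_inv]
  rw [← mul_one M, ← map_one (g.mapMatrix : Matrix (Fin 2) (Fin 2) B →+* _), ← V.inv_mul,
    map_mul, ← mul_assoc]
  exact hN.mul (V.isUnit.map _)

end MapMatrix

section LocalRing

variable {R : Type*} [Ring R] [IsLocalRing R]

lemma isUnit_one_sub_of_not_isUnit {a : R} (h : ¬IsUnit a) : IsUnit (1 - a) :=
  (IsLocalRing.isUnit_or_isUnit_of_add_one (add_sub_cancel a 1)).resolve_left h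

lemma isUnit_one_add_of_not_isUnit {a : R} (h : ¬IsUnit a) : IsUnit (1 + a) := by
  simpa using isUnit_one_sub_of_not_isUnit (a := -a) (by rwa [IsUnit.neg_iff])

/-- The columns `E e₀` and `(1 - E) e₁` form a basis adapted to the idempotent `E`. -/
lemma Matrix.isConj_of_isIdempotentElem_of_isUnit {E : Matrix (Fin 2) (Fin 2) R}
    (hE : IsIdempotentElem E) (hE1 : E ≠ 1) (h00 : IsUnit (E 0 0)) :
    IsConj (diagonal ![1, 0]) E := by
  obtain ⟨u, hu⟩ := h00
  have hschur : ¬IsUnit (E 1 1 - E 1 0 * ↑u⁻¹ * E 0 1) := fun hs =>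
    hE1 ((IsIdempotentElem.iff_eq_one_of_isUnit (isUnit_of_isUnit_schur u hu.symm hs)).mp hE)
  set P : Matrix (Fin 2) (Fin 2) R := !![E 0 0, -E 0 1; E 1 0, 1 - E 1 1]
  have hP : IsUnit P := by
    refine isUnit_of_isUnit_schur u hu.symm ?_
    convert isUnit_one_sub_of_not_isUnit hschur using 1
    simp [P]
    noncomm_ring
  refine ⟨hP.unit, ?_⟩
  have r : ∀ i j, E i 0 * E 0 j + E i 1 * E 1 j = E i j := fun i j => by
    simpa [mul_apply, Fin.sum_univ_two] using congrFun (congrFun hE.eq i) j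
  rw [SemiconjBy, IsUnit.unit_spec]
  ext i j
  have hcancel : ∀ a b c : R, -a + b * (1 - c) = b - (a + b * c) := fun _ _ _ => by noncomm_ring
  fin_cases i <;> fin_cases j <;>
    simp [P, mul_apply, Fin.sum_univ_two, hcancel, r]

lemma Matrix.isConj_of_isIdempotentElem {E : Matrix (Fin 2) (Fin 2) R} (hE : IsIdempotentElem E)
    (hE0 : E ≠ 0) (hE1 : E ≠ 1) : IsConj (diagonal ![1, 0]) E := by
  rcases IsLocalRing.isUnit_or_isUnit_of_add_one (add_sub_cancel (E 0 0) 1) with h | h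
  · exact isConj_of_isIdempotentElem_of_isUnit hE hE1 h
  have hswap : IsConj (diagonal ![(1 : R), 0]) (1 - diagonal ![1, 0]) := by
    refine ⟨⟨!![0, 1; 1, 0], !![0, 1; 1, 0], by simp [one_fin_two], by simp [one_fin_two]⟩, ?_⟩
    change !![0, 1; 1, 0] * _ = (1 - _) * !![0, 1; 1, 0]
    rw [diagonal_vec2, one_fin_two]
    simp
  have hcompl := isConj_of_isIdempotentElem_of_isUnit hE.one_sub (by simpa using hE0)
    (by simpa using h)
  simpa using hswap.trans hcompl.one_sub

lemma Matrix.exists_isConj_diagonal_of_isStronglyClean {A : Matrix (Fin 2) (Fin 2) R}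
    (hA : IsStronglyClean A) (hA0 : ¬IsUnit A) (hA1 : ¬IsUnit (1 - A)) :
    ∃ p j : R, ¬IsUnit p ∧ ¬IsUnit j ∧ IsConj A (diagonal ![p, 1 + j]) := by
  obtain ⟨E, U, hE, hU, rfl, hEU⟩ := hA
  have hE0 : E ≠ 0 := by rintro rfl; simp_all
  have hE1 : E ≠ 1 := by rintro rfl; simp_all [hU.neg]
  obtain ⟨f, hfE, hf⟩ := (isConj_of_isIdempotentElem hE hE0 hE1).symm.exists_ringEquiv
  have hfU : f U = diagonal ![f U 0 0, f U 1 1] :=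
    eq_diagonal_of_commute (hfE ▸ Commute.map (show Commute U E from hEU.symm) f)
  have hunits := isUnit_diagonal_iff.mp (hfU ▸ hU.map f)
  simp only [Fin.forall_fin_two, cons_val_zero, cons_val_one] at hunits
  have hconj : IsConj (E + U) (diagonal ![1 + f U 0 0, 1 + (f U 1 1 - 1)]) := by
    convert hf (E + U) using 1
    rw [map_add, hfE, hfU, diagonal_add, add_sub_cancel]
    congr 1
    ext i
    fin_cases i <;> simp
  refine ⟨_, _, fun hp => hA0 ?_, fun hj => hA1 ?_, hconj⟩
  · rw [hconj.isUnit_iff, isUnit_diagonal_iff]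
    simp [Fin.forall_fin_two, hp, hunits.2]
  · rw [hconj.one_sub.isUnit_iff, ← diagonal_one, diagonal_sub, isUnit_diagonal_iff]
    simpa [Fin.forall_fin_two, hunits.1] using hj.neg

end LocalRing

section WeaklyBleached

variable {R : Type*} [Ring R]

lemma IsWeaklyBleached.surjective_mul_sub_mul (hR : IsWeaklyBleached R) {j k : R}
    (hj : ¬IsUnit j) (hk : ¬IsUnit k) :
    Function.Surjective fun x : R => x * (1 + j) - k * x := fun t => by
  obtain ⟨x, hx⟩ := (hR j k hj hk).2 (-t)
  exact ⟨x, by simp only at hx ⊢; rw [← neg_sub, hx, neg_neg]⟩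

lemma RingHom.not_isUnit_pow_apply {σ : R →+* R} (hσ : ∀ j : R, ¬IsUnit j → ¬IsUnit (σ j))
    (n : ℕ) {j : R} (hj : ¬IsUnit j) : ¬IsUnit ((σ ^ n) j) := by
  induction n with
  | zero => exact hj
  | succ n ih =>
    rw [RingHom.coe_pow, Function.iterate_succ_apply', ← RingHom.coe_pow]
    exact hσ _ ih

end WeaklyBleached

section SuccessiveApproximation

variable {R S : Type*} [AddCommGroup R] [AddCommGroup S] (c : S ≃+ (ℕ → R))

noncomputable def AddEquiv.approxSeq (x : ℕ → S → R) : ℕ → S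
  | 0 => 0
  | n + 1 => approxSeq x n + c.symm (Pi.single n (x n (approxSeq x n)))

lemma AddEquiv.apply_approxSeq_of_lt (x : ℕ → S → R) {k m : ℕ} (hkm : k < m) :
    c (c.approxSeq x m) k = c (c.approxSeq x (k + 1)) k := by
  induction m with
  | zero => omega
  | succ m ih =>
    rcases Nat.lt_succ_iff_lt_or_eq.mp hkm with hlt | rfl
    · rw [approxSeq, map_add, Pi.add_apply, c.apply_symm_apply, Pi.single_apply,
        if_neg hlt.ne, add_zero, ih hlt]
    · rfl

lemma AddEquiv.exists_eq_zero_of_triangular (F : S → S) (L : ℕ → R → R)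
    (hL : ∀ n, Function.Surjective (L n))
    (hF : ∀ n a b, (∀ k ≤ n, c a k = c b k) → c (F a) n = c (F b) n)
    (hFL : ∀ n a x, c (F (a + c.symm (Pi.single n x))) n = c (F a) n + L n x) :
    ∃ a, F a = 0 := by
  choose x hx using fun n t => hL n (-c (F t) n)
  refine ⟨c.symm fun k => c (c.approxSeq x (k + 1)) k, c.injective (funext fun n => ?_)⟩
  calc c (F (c.symm fun k => c (c.approxSeq x (k + 1)) k)) n
      = c (F (c.approxSeq x (n + 1))) n := hF n _ _ fun k hk => by
        rw [c.apply_symm_apply, c.apply_approxSeq_of_lt x (Nat.lt_succ_of_le hk)]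
    _ = 0 := by rw [approxSeq, hFL, hx, add_neg_cancel]
    _ = c 0 n := by rw [map_zero, Pi.zero_apply]

end SuccessiveApproximation

/-- `c` reads off the coefficients of `S` as the left skew power series ring `R[[x; σ]]`,
in which `x * r = σ r * x`. -/
def IsSkewConvolution {R S : Type*} [Ring R] [Ring S] (σ : R →+* R) (c : S ≃+ (ℕ → R)) : Prop :=
  ∀ a b : S, ∀ n : ℕ,
    c (a * b) n = ∑ p ∈ Finset.HasAntidiagonal.antidiagonal n, c a p.1 * (σ ^ p.1) (c b p.2)

namespace IsSkewConvolution

variable {R S : Type*} [Ring R] [Ring S] {σ : R →+* R} {c : S ≃+ (ℕ → R)}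
  (hc : IsSkewConvolution σ c)
include hc

lemma coeff_mul_congr {n : ℕ} {a a' b b' : S} (ha : ∀ k ≤ n, c a k = c a' k)
    (hb : ∀ k ≤ n, c b k = c b' k) : ∀ k ≤ n, c (a * b) k = c (a' * b') k := by
  intro k hk
  rw [hc a b k, hc a' b' k]
  refine Finset.sum_congr rfl fun p hp => ?_
  rw [ha p.1 ((Finset.HasAntidiagonal.antidiagonal.fst_le hp).trans hk),
    hb p.2 ((Finset.HasAntidiagonal.antidiagonal.snd_le hp).trans hk)]

lemma coeff_zero_mul (a b : S) : c (a * b) 0 = c a 0 * c b 0 := by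
  simp [hc a b 0]

lemma coeff_mul_single_self (a : S) (n : ℕ) (x : R) :
    c (a * c.symm (Pi.single n x)) n = c a 0 * x := by
  rw [hc _ _ n, Finset.sum_eq_single (0, n)]
  · simp
  · rintro ⟨i, j⟩ hij hne
    have : j ≠ n := by rintro rfl; simp_all
    simp [this]
  · simp

lemma coeff_single_mul_self (a : S) (n : ℕ) (x : R) :
    c (c.symm (Pi.single n x) * a) n = x * (σ ^ n) (c a 0) := by
  rw [hc _ _ n, Finset.sum_eq_single (n, 0)]
  · simp
  · rintro ⟨i, j⟩ hij hne
    have : i ≠ n := by rintro rfl; simp_all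
    simp [this]
  · simp

lemma coeff_mul_single_zero (a : S) (n : ℕ) (x : R) :
    c (a * c.symm (Pi.single 0 x)) n = c a n * (σ ^ n) x := by
  rw [hc _ _ n, Finset.sum_eq_single (n, 0)]
  · simp
  · rintro ⟨i, j⟩ hij hne
    have : j ≠ 0 := by rintro rfl; simp_all
    simp [this]
  · simp

lemma coeff_one : c 1 = Pi.single 0 1 := by
  ext n
  simpa using (hc.coeff_mul_single_zero 1 n 1).symm

def constCoeff : S →+* R where
  toFun a := c a 0
  map_one' := by simp [hc.coeff_one]
  map_mul' := hc.coeff_zero_mul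
  map_zero' := by simp
  map_add' a b := by simp

@[simp]
lemma constCoeff_apply (a : S) : hc.constCoeff a = c a 0 := rfl

def C : R →+* S where
  toFun r := c.symm (Pi.single 0 r)
  map_one' := c.symm_apply_eq.mpr hc.coeff_one.symm
  map_mul' r s := c.injective <| funext fun n => by
    rcases eq_or_ne n 0 with rfl | hn
    · simp [hc.coeff_mul_single_zero]
    · simp [hc.coeff_mul_single_zero, hn]
  map_zero' := by simp
  map_add' r s := by simp [Pi.single_add]

lemma constCoeff_C (r : R) : hc.constCoeff (hc.C r) = r := by
  simp [constCoeff, C]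

lemma isLocalHom_constCoeff : IsLocalHom hc.constCoeff := by
  refine ⟨fun a ⟨u, hu⟩ => ?_⟩
  change ↑u = c a 0 at hu
  obtain ⟨b, hb⟩ := c.exists_eq_zero_of_triangular (fun y => a * y - 1) (fun _ x => c a 0 * x)
    (fun n t => ⟨↑u⁻¹ * t, by simp [← hu]⟩)
    (fun n y y' h => by
      simp only [map_sub, Pi.sub_apply, hc.coeff_mul_congr (fun _ _ => rfl) h n le_rfl])
    (fun n y x => by
      simp only [mul_add, add_sub_right_comm, map_add, Pi.add_apply, hc.coeff_mul_single_self])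
  obtain ⟨b', hb'⟩ := c.exists_eq_zero_of_triangular (fun y => y * a - 1)
    (fun n x => x * (σ ^ n) (c a 0))
    (fun n t => ⟨t * (σ ^ n) ↑u⁻¹, by
      simp only [← hu, mul_assoc, ← map_mul, Units.inv_mul, map_one, mul_one]⟩)
    (fun n y y' h => by
      simp only [map_sub, Pi.sub_apply, hc.coeff_mul_congr h (fun _ _ => rfl) n le_rfl])
    (fun n y x => by
      simp only [add_mul, add_sub_right_comm, map_add, Pi.add_apply, hc.coeff_single_mul_self])
  rw [sub_eq_zero] at hb hb'
  exact isUnit_iff_exists.mpr ⟨b, hb, left_inv_eq_right_inv hb' hb ▸ hb'⟩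

/-- The conjugating lower unipotent matrix solves the Riccati equation `e z + z b z - z a = d`. -/
lemma exists_isConj_upperTriangular {a b d e : S} (hb : c b 0 = 0)
    (hs : ∀ n, Function.Surjective fun x : R => c e 0 * x - x * (σ ^ n) (c a 0)) :
    ∃ z : S, IsConj !![a, b; d, e] !![a - b * z, b; 0, z * b + e] := by
  obtain ⟨z, hz⟩ := c.exists_eq_zero_of_triangular (fun z => e * z + z * b * z - z * a - d)
    (fun n x => c e 0 * x - x * (σ ^ n) (c a 0)) hs
    (fun n y y' h => by
      have hey : c (e * y) n = c (e * y') n := hc.coeff_mul_congr (fun _ _ => rfl) h n le_rfl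
      have hya : c (y * a) n = c (y' * a) n := hc.coeff_mul_congr h (fun _ _ => rfl) n le_rfl
      have hyby : c (y * b * y) n = c (y' * b * y') n :=
        hc.coeff_mul_congr (hc.coeff_mul_congr h fun _ _ => rfl) h n le_rfl
      simp only [map_sub, map_add, Pi.sub_apply, Pi.add_apply, hey, hya, hyby])
    (fun n y x => by
      have expand : ∀ X : S, e * (y + X) + (y + X) * b * (y + X) - (y + X) * a - d =
          (e * y + y * b * y - y * a - d) + (e * X - X * a) +
            (X * (b * y) + y * b * X + X * b * X) := fun X => by noncomm_ring
      simp only [expand, map_add, map_sub, Pi.add_apply, Pi.sub_apply, hc.coeff_mul_single_self,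
        hc.coeff_single_mul_self, hc.coeff_zero_mul, hb, mul_zero, zero_mul, map_zero, add_zero])
  refine ⟨z, (isUnit_lowerUnipotent z).unit, ?_⟩
  have hz' : (z * b + e) * z = z * a + d := by
    rw [← sub_eq_zero, ← hz]
    noncomm_ring
  simp [SemiconjBy, hz']

/-- The conjugating upper unipotent matrix solves the Sylvester equation `a y - y e = b`. -/
lemma isConj_diagonal_of_upperTriangular {a b e : S}
    (hs : ∀ n, Function.Surjective fun x : R => x * (σ ^ n) (c e 0) - c a 0 * x) :
    IsConj !![a, b; 0, e] (diagonal ![a, e]) := by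
  obtain ⟨y, hy⟩ := c.exists_eq_zero_of_triangular (fun y => y * e - a * y + b)
    (fun n x => x * (σ ^ n) (c e 0) - c a 0 * x) hs
    (fun n y y' h => by
      simp only [map_sub, map_add, Pi.sub_apply, Pi.add_apply,
        hc.coeff_mul_congr (fun _ _ => rfl) h n le_rfl,
        hc.coeff_mul_congr h (fun _ _ => rfl) n le_rfl])
    (fun n y x => by
      have expand : ∀ X : S,
          (y + X) * e - a * (y + X) + b = (y * e - a * y + b) + (X * e - a * X) := fun X => by
        noncomm_ring
      simp only [expand, map_add, map_sub, Pi.add_apply, Pi.sub_apply, hc.coeff_mul_single_self,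
        hc.coeff_single_mul_self])
  refine ⟨(isUnit_upperUnipotent y).unit, ?_⟩
  have hy' : b + y * e = a * y := by
    rw [← sub_eq_zero, ← hy]
    noncomm_ring
  simp [SemiconjBy, diagonal_vec2, hy']

lemma isStronglyClean_of_constCoeff_eq_diagonal [IsLocalRing R] (hwb : IsWeaklyBleached R)
    (hσ : ∀ j : R, ¬IsUnit j → ¬IsUnit (σ j)) {β : Matrix (Fin 2) (Fin 2) S} {p j : R}
    (hp : ¬IsUnit p) (hj : ¬IsUnit j) (hβ : hc.constCoeff.mapMatrix β = diagonal ![p, 1 + j]) :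
    IsStronglyClean β := by
  have := hc.isLocalHom_constCoeff
  have hβ' : ∀ i k, c (β i k) 0 = diagonal ![p, 1 + j] i k := fun i k =>
    congrFun (congrFun hβ i) k
  simp only [Fin.forall_fin_two, diagonal_apply_eq, diagonal_apply_ne _ Fin.zero_ne_one,
    diagonal_apply_ne _ Fin.zero_ne_one.symm, cons_val_zero, cons_val_one] at hβ'
  obtain ⟨⟨h00, h01⟩, -, h11⟩ := hβ'
  obtain ⟨z, hz⟩ := hc.exists_isConj_upperTriangular (a := β 0 0) (d := β 1 0) (e := β 1 1) h01
    fun n => by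
      simpa [h00, h11] using (hwb j _ hj (σ.not_isUnit_pow_apply hσ n hp)).1
  have ha : c (β 0 0 - β 0 1 * z) 0 = p := by simp [hc.coeff_zero_mul, h00, h01]
  have he : c (z * β 0 1 + β 1 1) 0 = 1 + j := by simp [hc.coeff_zero_mul, h01, h11]
  have hdiag := hc.isConj_diagonal_of_upperTriangular (a := β 0 0 - β 0 1 * z) (b := β 0 1)
    (e := z * β 0 1 + β 1 1) fun n => by
    simpa [ha, he] using hwb.surjective_mul_sub_mul (σ.not_isUnit_pow_apply hσ n hj) hp
  rw [eta_fin_two β]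
  refine (hz.trans hdiag).symm.isStronglyClean
    (isStronglyClean_diagonal (Fin.forall_fin_two.mpr ⟨?_, ?_⟩))
  · refine .of_isUnit_one_sub (IsUnit.of_map hc.constCoeff _ ?_)
    rw [map_sub, map_one, constCoeff_apply, cons_val_zero, ha]
    exact isUnit_one_sub_of_not_isUnit hp
  · refine .of_isUnit (IsUnit.of_map hc.constCoeff _ ?_)
    rw [constCoeff_apply, cons_val_one, cons_val_zero, he]
    exact isUnit_one_add_of_not_isUnit hj

end IsSkewConvolution

theorem matrix_two_stronglyClean_skewPowerSeries_general {R : Type*} [Ring R] [IsLocalRing R]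
    (hwb : IsWeaklyBleached R)
    (hR : ∀ A : Matrix (Fin 2) (Fin 2) R, IsStronglyClean A)
    (σ : R →+* R) (hσ : ∀ j : R, ¬ IsUnit j → ¬ IsUnit (σ j))
    (S : Type*) [Ring S] (c : S ≃+ (ℕ → R))
    (hmul : ∀ a b : S, ∀ n : ℕ,
      c (a * b) n = ∑ p ∈ Finset.HasAntidiagonal.antidiagonal n, c a p.1 * (σ ^ p.1) (c b p.2)) :
    ∀ A : Matrix (Fin 2) (Fin 2) S, IsStronglyClean A := by
  intro α
  have hc : IsSkewConvolution σ c := hmul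
  have := hc.isLocalHom_constCoeff
  have hsection : Function.RightInverse hc.C hc.constCoeff := hc.constCoeff_C
  set π : Matrix (Fin 2) (Fin 2) S →+* Matrix (Fin 2) (Fin 2) R := hc.constCoeff.mapMatrix
  by_cases h₁ : IsUnit (π α)
  · exact .of_isUnit (isUnit_of_isUnit_mapMatrix _ _ hsection h₁)
  by_cases h₂ : IsUnit (1 - π α)
  · refine .of_isUnit_one_sub (isUnit_of_isUnit_mapMatrix _ _ hsection ?_)
    rwa [map_sub, map_one]
  obtain ⟨p, j, hp, hj, hconj⟩ := exists_isConj_diagonal_of_isStronglyClean (hR _) h₁ h₂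
  obtain ⟨β, hαβ, hβ⟩ :=
    hconj.exists_isConj_map_eq π hc.C.mapMatrix (RingHom.mapMatrix_rightInverse hsection)
  exact hαβ.symm.isStronglyClean (hc.isStronglyClean_of_constCoeff_eq_diagonal hwb hσ hp hj hβ)

/-- Let `R` be a weakly bleached local ring with `M₂(R)` strongly clean, and `σ` an
endomorphism of `R` with `σ(J(R)) ⊆ J(R)`.  Then `M₂(R[[x; σ]])` is strongly clean.
Here the left skew power series ring `R[[x; σ]]` (with relation `x·r = σ(r)·x`) is
presented as a ring `S` whose elements correspond additively to coefficient sequences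
`ℕ → R`, with `1` the sequence supported at `0` and with multiplication given by the
skew convolution `(ab)ₙ = ∑_{i+j=n} aᵢ · σ^i(bⱼ)`. -/
theorem matrix_two_stronglyClean_skewPowerSeries {R : Type*} [Ring R] [IsLocalRing R]
    (hwb : IsWeaklyBleached R)
    (hR : ∀ A : Matrix (Fin 2) (Fin 2) R, IsStronglyClean A)
    (σ : R →+* R) (hσ : ∀ j : R, ¬ IsUnit j → ¬ IsUnit (σ j))
    (S : Type*) [Ring S] (c : S ≃+ (ℕ → R))
    (hone : c 1 = fun n => if n = 0 then 1 else 0)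
    (hmul : ∀ a b : S, ∀ n : ℕ,
      c (a * b) n = ∑ p ∈ Finset.HasAntidiagonal.antidiagonal n, c a p.1 * (σ ^ p.1) (c b p.2)) :
    ∀ A : Matrix (Fin 2) (Fin 2) S, IsStronglyClean A :=
  matrix_two_stronglyClean_skewPowerSeries_general hwb hR σ hσ S c hmul
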